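/- arXiv:1803.07164 — 3 statements merged into one kernel-verified Lean document; each statement's English description precedes it below -/
import Mathlib

section
/- Let H be a metric space (the hypothesis space), and assume the identified set H_I is nonempty. Let F be a finite nonempty set of bounded measurable functions f : 𝒳 → [0,∞), and let γ, κ : [0,∞) → [0,∞). Assume (γ-test property): for every x ∈ 𝒳 there exists f̄ in the convex hull of F (in the vector space of functions 𝒳 → ℝ) such that for every h ∈ H and every ε' ≥ 0, |∫ ρ h ω · f̄(X ω) dP(ω)| ≤ ε' implies |Ψ h x| ≤ γ(ε'). Assume (κ property): for every h ∈ H and ε' ≥ 0, if |Ψ h x| ≤ ε' for all x ∈ 𝒳, then the distance from h to the set H_I is at most κ(ε'). Let ε ≥ 0 and let (h*, σ*) with h* ∈ H and σ* a probability vector on F be an ε-equilibrium of the zero-sum game with loss L, meaning sup_σ L(h*, σ) ≤ inf_{h∈H} sup_σ L(h, σ) + ε and inf_{h∈H} L(h, σ*) ≥ sup_σ inf_{h∈H} L(h, σ) − ε, where sup and inf over σ range over probability vectors on F. Then the distance from h* to H_I is at most κ(γ(√ε)). -/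
/-!
At a point `h₀` of the identified set every moment `∫ ρ h₀ · f(X)` with `f ∈ F` vanishes, so the
worst-case loss of `h₀` is `0` and the game value `inf_h sup_σ L(h, σ)` is at most `0`. The first
equilibrium inequality then bounds the worst-case loss of `h*` by `ε`; testing it against the point
masses of `F` gives `|∫ ρ h* · f(X)| ≤ √ε` for every `f ∈ F`. The moment is affine in the test
function, so the same bound holds on the convex hull of `F`, and the `γ`-test and `κ` properties
turn it into `infDist h* H_I ≤ κ(γ(√ε))`.
-/

open MeasureTheory

def IsProbVecOn {α : Type*} (F : Finset α) (σ : α → ℝ) : Prop :=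
  (∀ f ∈ F, 0 ≤ σ f ∧ σ f ≤ 1) ∧ ∑ f ∈ F, σ f = 1

section WorstCaseLoss

variable {α : Type*} {F : Finset α} {v : α → ℝ}

noncomputable def worstCaseLoss (F : Finset α) (v : α → ℝ) : ℝ :=
  sSup {y | ∃ σ, IsProbVecOn F σ ∧ y = ∑ f ∈ F, σ f * v f}

theorem isProbVecOn_ite_eq [DecidableEq α] {f : α} (hf : f ∈ F) :
    IsProbVecOn F (fun g => if g = f then 1 else 0) := by
  refine ⟨fun g _ => ?_, by simp [hf]⟩
  by_cases hgf : g = f <;> simp [hgf]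

theorem bddAbove_probVec_sums :
    BddAbove {y | ∃ σ, IsProbVecOn F σ ∧ y = ∑ f ∈ F, σ f * v f} := by
  refine ⟨∑ f ∈ F, |v f|, ?_⟩
  rintro _ ⟨σ, hσ, rfl⟩
  refine Finset.sum_le_sum fun f hf => ?_
  obtain ⟨hσ₀, hσ₁⟩ := hσ.1 f hf
  calc σ f * v f ≤ σ f * |v f| := mul_le_mul_of_nonneg_left (le_abs_self _) hσ₀
    _ ≤ 1 * |v f| := mul_le_mul_of_nonneg_right hσ₁ (abs_nonneg _)
    _ = |v f| := one_mul _

theorem le_worstCaseLoss {f : α} (hf : f ∈ F) : v f ≤ worstCaseLoss F v := by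
  classical
  refine le_csSup bddAbove_probVec_sums ⟨_, isProbVecOn_ite_eq hf, ?_⟩
  simp [hf]

theorem worstCaseLoss_eq_zero (hF : F.Nonempty) (hv : ∀ f ∈ F, v f = 0) :
    worstCaseLoss F v = 0 := by
  classical
  obtain ⟨f₀, hf₀⟩ := hF
  refine le_antisymm (csSup_le ⟨_, _, isProbVecOn_ite_eq hf₀, rfl⟩ ?_) ?_
  · rintro _ ⟨σ, -, rfl⟩
    exact (Finset.sum_eq_zero fun f hf => by rw [hv f hf, mul_zero]).le
  · simpa [hv f₀ hf₀] using le_worstCaseLoss (v := v) hf₀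

theorem abs_le_sqrt_of_worstCaseLoss_le {H : Type*} (hF : F.Nonempty) (m : H → α → ℝ) {h₀ : H}
    (hm₀ : ∀ f ∈ F, m h₀ f = 0) {h : H} {ε : ℝ}
    (hh : worstCaseLoss F (fun f => m h f ^ 2) ≤
      sInf {y | ∃ h' : H, y = worstCaseLoss F (fun f => m h' f ^ 2)} + ε) :
    ∀ f ∈ F, |m h f| ≤ Real.sqrt ε := by
  obtain ⟨f₀, hf₀⟩ := hF
  have hvalue : sInf {y | ∃ h' : H, y = worstCaseLoss F (fun f => m h' f ^ 2)} ≤ 0 := by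
    refine csInf_le ⟨0, ?_⟩ ⟨h₀, ?_⟩
    · rintro _ ⟨h', rfl⟩
      exact (sq_nonneg _).trans (le_worstCaseLoss (v := fun f => m h' f ^ 2) hf₀)
    · exact (worstCaseLoss_eq_zero ⟨f₀, hf₀⟩ fun f hf => by simp [hm₀ f hf]).symm
  intro f hf
  rw [← Real.sqrt_sq_eq_abs]
  exact Real.sqrt_le_sqrt (by linarith [le_worstCaseLoss (v := fun f => m h f ^ 2) hf])

end WorstCaseLoss

section MomentsOnConvexHull

variable {Ω 𝒳 : Type*} [MeasurableSpace Ω] {P : Measure Ω} {ρ : Ω → ℝ} {X : Ω → 𝒳}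

theorem convex_setOf_abs_integral_mul_comp_le (δ : ℝ) :
    Convex ℝ {g : 𝒳 → ℝ | Integrable (fun ω => ρ ω * g (X ω)) P ∧
      |∫ ω, ρ ω * g (X ω) ∂P| ≤ δ} := by
  rintro g₁ ⟨hi₁, hb₁⟩ g₂ ⟨hi₂, hb₂⟩ a b ha hb hab
  have hsplit : (fun ω => ρ ω * (a • g₁ + b • g₂) (X ω)) =
      fun ω => a * (ρ ω * g₁ (X ω)) + b * (ρ ω * g₂ (X ω)) := by
    funext ω
    simp only [Pi.add_apply, Pi.smul_apply, smul_eq_mul]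
    ring
  refine ⟨by rw [hsplit]; exact (hi₁.const_mul a).add (hi₂.const_mul b), ?_⟩
  rw [hsplit, integral_add (hi₁.const_mul a) (hi₂.const_mul b), integral_const_mul,
    integral_const_mul]
  calc |a * ∫ ω, ρ ω * g₁ (X ω) ∂P + b * ∫ ω, ρ ω * g₂ (X ω) ∂P|
      ≤ a * |∫ ω, ρ ω * g₁ (X ω) ∂P| + b * |∫ ω, ρ ω * g₂ (X ω) ∂P| := by
        refine (abs_add_le _ _).trans_eq ?_
        rw [abs_mul, abs_mul, abs_of_nonneg ha, abs_of_nonneg hb]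
    _ ≤ a * δ + b * δ := by gcongr
    _ = δ := by rw [← add_mul, hab, one_mul]

theorem abs_integral_mul_comp_le_of_mem_convexHull {F : Set (𝒳 → ℝ)} {δ : ℝ}
    (hint : ∀ f ∈ F, Integrable (fun ω => ρ ω * f (X ω)) P)
    (hF : ∀ f ∈ F, |∫ ω, ρ ω * f (X ω) ∂P| ≤ δ) {g : 𝒳 → ℝ} (hg : g ∈ convexHull ℝ F) :
    |∫ ω, ρ ω * g (X ω) ∂P| ≤ δ := by
  have hsub : F ⊆ {g : 𝒳 → ℝ | Integrable (fun ω => ρ ω * g (X ω)) P ∧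
      |∫ ω, ρ ω * g (X ω) ∂P| ≤ δ} := fun f hf => ⟨hint f hf, hF f hf⟩
  exact (convexHull_min hsub (convex_setOf_abs_integral_mul_comp_le δ) hg).2

theorem integrable_mul_comp_of_bounded [MeasurableSpace 𝒳] (hρ : Integrable ρ P)
    (hX : Measurable X) {f : 𝒳 → ℝ} (hf : Measurable f) (hbdd : ∃ C, ∀ x, |f x| ≤ C) :
    Integrable (fun ω => ρ ω * f (X ω)) P := by
  obtain ⟨C, hC⟩ := hbdd
  exact hρ.mul_bdd (hf.comp hX).aestronglyMeasurable (ae_of_all _ fun ω => hC (X ω))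

end MomentsOnConvexHull

theorem stmt0_general
    {Ω : Type*} [MeasurableSpace Ω] (P : Measure Ω)
    {𝒳 : Type*} [MeasurableSpace 𝒳] (X : Ω → 𝒳) (hX : Measurable X)
    {H : Type*} [MetricSpace H]
    (ρ : H → Ω → ℝ) (hρ : ∀ h, Integrable (ρ h) P)
    (Ψ : H → 𝒳 → ℝ)
    (hΨ : ∀ (h : H) (f : 𝒳 → ℝ), Measurable f → (∃ C, ∀ x, |f x| ≤ C) →
      ∫ ω, ρ h ω * f (X ω) ∂P = ∫ ω, Ψ h (X ω) * f (X ω) ∂P)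
    (HI : Set H) (hHI : HI = {h | ∀ x, Ψ h x = 0}) (hHIne : HI.Nonempty)
    (F : Finset (𝒳 → ℝ)) (hFne : F.Nonempty)
    (hF : ∀ f ∈ F, Measurable f ∧ (∃ C, ∀ x, |f x| ≤ C) ∧ ∀ x, 0 ≤ f x)
    (γ κ : ℝ → ℝ) (hγ : ∀ t, 0 ≤ t → 0 ≤ γ t)
    -- `F` is a set of γ-test functions
    (hTest : ∀ x : 𝒳, ∃ fbar ∈ convexHull ℝ (F : Set (𝒳 → ℝ)),
      ∀ (h : H) (ε' : ℝ), 0 ≤ ε' →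
        |∫ ω, ρ h ω * fbar (X ω) ∂P| ≤ ε' → |Ψ h x| ≤ γ ε')
    -- the κ property: small conditional moment violations imply closeness to `HI`
    (hκprop : ∀ (h : H) (ε' : ℝ), 0 ≤ ε' →
      (∀ x, |Ψ h x| ≤ ε') → Metric.infDist h HI ≤ κ ε')
    -- the game loss
    (L : H → ((𝒳 → ℝ) → ℝ) → ℝ)
    (hL : ∀ h σ, L h σ = ∑ f ∈ F, σ f * (∫ ω, ρ h ω * f (X ω) ∂P) ^ 2)
    -- `(hstar, σstar)` is an ε-equilibrium of the zero-sum game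
    (ε : ℝ) (hstar : H)
    (heq1 : sSup {y | ∃ σ, IsProbVecOn F σ ∧ y = L hstar σ} ≤
      sInf {y | ∃ h : H, y = sSup {z | ∃ σ, IsProbVecOn F σ ∧ z = L h σ}} + ε) :
    Metric.infDist hstar HI ≤ κ (γ (Real.sqrt ε)) := by
  obtain ⟨h₀, hh₀⟩ := hHIne
  have hΨ₀ : ∀ x, Ψ h₀ x = 0 := by rwa [hHI] at hh₀
  have hmoment₀ : ∀ f ∈ F, ∫ ω, ρ h₀ ω * f (X ω) ∂P = 0 := fun f hf => by
    simp [hΨ h₀ f (hF f hf).1 (hF f hf).2.1, hΨ₀]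
  have hmoment : ∀ f ∈ F, |∫ ω, ρ hstar ω * f (X ω) ∂P| ≤ Real.sqrt ε := by
    simp only [hL] at heq1
    exact abs_le_sqrt_of_worstCaseLoss_le hFne (fun h f => ∫ ω, ρ h ω * f (X ω) ∂P)
      hmoment₀ heq1
  refine hκprop hstar _ (hγ _ (Real.sqrt_nonneg ε)) fun x => ?_
  obtain ⟨fbar, hfbar, htest⟩ := hTest x
  have hint : ∀ f ∈ F, Integrable (fun ω => ρ hstar ω * f (X ω)) P := fun f hf =>
    integrable_mul_comp_of_bounded (hρ hstar) hX (hF f hf).1 (hF f hf).2.1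
  exact htest hstar _ (Real.sqrt_nonneg ε)
    (abs_integral_mul_comp_le_of_mem_convexHull hint hmoment hfbar)

/-- **Approximate set identification (Theorem 1).**  Any `ε`-equilibrium `(h*, σ*)` of the
zero-sum game defined by a finite set `F` of `γ`-test functions has its model `h*` within
Hausdorff distance `κ(γ(√ε))` of the identified set. -/
theorem stmt0
    {Ω : Type*} [MeasurableSpace Ω] (P : Measure Ω) [IsProbabilityMeasure P]
    {𝒳 : Type*} [MeasurableSpace 𝒳] (X : Ω → 𝒳) (hX : Measurable X)
    {H : Type*} [MetricSpace H]
    (ρ : H → Ω → ℝ) (hρ : ∀ h, Integrable (ρ h) P)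
    (Ψ : H → 𝒳 → ℝ)
    (hΨ : ∀ (h : H) (f : 𝒳 → ℝ), Measurable f → (∃ C, ∀ x, |f x| ≤ C) →
      ∫ ω, ρ h ω * f (X ω) ∂P = ∫ ω, Ψ h (X ω) * f (X ω) ∂P)
    (HI : Set H) (hHI : HI = {h | ∀ x, Ψ h x = 0}) (hHIne : HI.Nonempty)
    (F : Finset (𝒳 → ℝ)) (hFne : F.Nonempty)
    (hF : ∀ f ∈ F, Measurable f ∧ (∃ C, ∀ x, |f x| ≤ C) ∧ ∀ x, 0 ≤ f x)
    (γ κ : ℝ → ℝ) (hγ : ∀ t, 0 ≤ t → 0 ≤ γ t) (hκ : ∀ t, 0 ≤ t → 0 ≤ κ t)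
    -- `F` is a set of γ-test functions
    (hTest : ∀ x : 𝒳, ∃ fbar ∈ convexHull ℝ (F : Set (𝒳 → ℝ)),
      ∀ (h : H) (ε' : ℝ), 0 ≤ ε' →
        |∫ ω, ρ h ω * fbar (X ω) ∂P| ≤ ε' → |Ψ h x| ≤ γ ε')
    -- the κ property: small conditional moment violations imply closeness to `HI`
    (hκprop : ∀ (h : H) (ε' : ℝ), 0 ≤ ε' →
      (∀ x, |Ψ h x| ≤ ε') → Metric.infDist h HI ≤ κ ε')
    -- the game loss
    (L : H → ((𝒳 → ℝ) → ℝ) → ℝ)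
    (hL : ∀ h σ, L h σ = ∑ f ∈ F, σ f * (∫ ω, ρ h ω * f (X ω) ∂P) ^ 2)
    -- `(hstar, σstar)` is an ε-equilibrium of the zero-sum game
    (ε : ℝ) (hε : 0 ≤ ε) (hstar : H) (σstar : (𝒳 → ℝ) → ℝ)
    (hσstar : IsProbVecOn F σstar)
    (heq1 : sSup {y | ∃ σ, IsProbVecOn F σ ∧ y = L hstar σ} ≤
      sInf {y | ∃ h : H, y = sSup {z | ∃ σ, IsProbVecOn F σ ∧ z = L h σ}} + ε)
    (heq2 : sInf {y | ∃ h : H, y = L h σstar} ≥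
      sSup {y | ∃ σ, IsProbVecOn F σ ∧ y = sInf {z | ∃ h : H, z = L h σ}} - ε) :
    Metric.infDist hstar HI ≤ κ (γ (Real.sqrt ε)) :=
  stmt0_general P X hX ρ hρ Ψ hΨ HI hHI hHIne F hFne hF γ κ hγ hTest hκprop L hL ε hstar heq1
end

section
/- Let d ≥ 1 be an integer and μ, λ > 0 real numbers. Let P be a probability measure on [0,1]^d ⊆ ℝ^d that is absolutely continuous with respect to Lebesgue measure with density g satisfying g(x) ≥ μ for Lebesgue-almost every x ∈ [0,1]^d. Let ψ : [0,1]^d → ℝ be λ-Lipschitz with respect to the ℓ∞ metric ‖x − y‖_∞ = max_i |x_i − y_i|. Let x₀ ∈ [0,1]^d, h ∈ (0,1], and ε ≥ 0. If |∫ ψ(x) · 1{‖x − x₀‖_∞ ≤ h} dP(x)| ≤ ε, then |ψ(x₀)| ≤ λ·h + ε/(μ·h^d). -/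
open MeasureTheory
open scoped ENNReal

/-!
Let `t = B(x₀, h) ∩ [0,1]^d`. Since `P` is carried by `[0,1]^d`, the hypothesis bounds
`|∫_t ψ dP|`, and on `t` the Lipschitz bound gives `|ψ - ψ(x₀)| ≤ λh`; hence
`|ψ(x₀)| P(t) ≤ ε + λh P(t)`. For `x₀ ∈ [0,1]^d` and `h ≤ 1`, each side of the cube
`t` has length at least `h`, so `P(t) ≥ μ · vol(t) ≥ μ h^d`; divide.
-/

theorem Real.ofReal_le_volume_closedBall_inter_Icc {x h : ℝ} (hx : x ∈ Set.Icc (0 : ℝ) 1)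
    (h0 : 0 ≤ h) (h1 : h ≤ 1) :
    ENNReal.ofReal h ≤ volume (Metric.closedBall x h ∩ Set.Icc 0 1) := by
  rw [Real.closedBall_eq_Icc, Set.Icc_inter_Icc, Real.volume_Icc]
  apply ENNReal.ofReal_le_ofReal
  rcases le_total (x - h) 0 with hc | hc
  · rw [sup_eq_right.2 hc]
    linarith [le_min (by linarith [hx.1] : h ≤ x + h) h1]
  · rw [sup_eq_left.2 hc]
    linarith [le_min (by linarith : x ≤ x + h) hx.2]

theorem ofReal_pow_card_le_volume_closedBall_inter_Icc {ι : Type*} [Fintype ι] {x : ι → ℝ}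
    {h : ℝ} (hx : x ∈ Set.Icc (0 : ι → ℝ) 1) (h0 : 0 ≤ h) (h1 : h ≤ 1) :
    ENNReal.ofReal h ^ Fintype.card ι ≤ volume (Metric.closedBall x h ∩ Set.Icc 0 1) := by
  rw [closedBall_pi x h0, ← Set.pi_univ_Icc, ← Set.pi_inter_distrib, volume_pi_pi,
    ← Finset.card_univ, ← Finset.prod_const]
  exact Finset.prod_le_prod' fun i _ =>
    Real.ofReal_le_volume_closedBall_inter_Icc ⟨hx.1 i, hx.2 i⟩ h0 h1

theorem mul_le_withDensity_apply_of_ae_le {α : Type*} [MeasurableSpace α] {ν : Measure α}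
    {g : α → ℝ≥0∞} {S A : Set α} {c : ℝ≥0∞} (hgc : ∀ᵐ x ∂ν, x ∈ S → c ≤ g x)
    (hA : MeasurableSet A) (hAS : A ⊆ S) : c * ν A ≤ ν.withDensity g A := by
  rw [withDensity_apply _ hA, ← setLIntegral_const]
  exact lintegral_mono_ae ((ae_restrict_iff' hA).2 (hgc.mono fun x hx hxA => hx (hAS hxA)))

theorem abs_mul_measureReal_le {α : Type*} [MeasurableSpace α] {ν : Measure α}
    [IsFiniteMeasure ν] {s : Set α} {f : α → ℝ} {a δ : ℝ} (hf : IntegrableOn f s ν)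
    (hfa : ∀ x ∈ s, |f x - a| ≤ δ) :
    |a| * ν.real s ≤ |∫ x in s, f x ∂ν| + δ * ν.real s := by
  set I := ∫ x in s, f x ∂ν
  have hdev : |I - a * ν.real s| ≤ δ * ν.real s := by
    have : I - a * ν.real s = ∫ x in s, (f x - a) ∂ν := by
      rw [integral_sub hf (integrableOn_const (measure_ne_top ν s)), setIntegral_const,
        smul_eq_mul, mul_comm]
    rw [this]
    exact norm_setIntegral_le_of_norm_le_const (f := fun x => f x - a) (measure_lt_top ν s) hfa
  have hm : |a| * ν.real s = |a * ν.real s| := by rw [abs_mul, abs_of_nonneg measureReal_nonneg]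
  linarith [abs_sub_abs_le_abs_sub (a * ν.real s) I, abs_sub_comm (a * ν.real s) I]

theorem abs_le_add_div_of_abs_setIntegral_le {α : Type*} [MeasurableSpace α] {ν : Measure α}
    [IsFiniteMeasure ν] {s : Set α} {f : α → ℝ} {a δ ε c : ℝ} (hf : IntegrableOn f s ν)
    (hfa : ∀ x ∈ s, |f x - a| ≤ δ) (hint : |∫ x in s, f x ∂ν| ≤ ε) (hc : 0 < c)
    (hcs : c ≤ ν.real s) : |a| ≤ δ + ε / c := by
  have hε : 0 ≤ ε := (abs_nonneg _).trans hint
  have key := abs_mul_measureReal_le hf hfa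
  calc |a| ≤ δ + ε / ν.real s := by
        rw [← sub_le_iff_le_add', le_div_iff₀ (hc.trans_le hcs)]
        linarith
    _ ≤ δ + ε / c := by gcongr

theorem stmt4_general
    {d : ℕ} (μ lam : ℝ) (hμ : 0 < μ) (hlam : 0 < lam)
    (g : (Fin d → ℝ) → ℝ≥0∞)
    (P : Measure (Fin d → ℝ)) [IsProbabilityMeasure P]
    (hP : P = volume.withDensity g)
    (hgμ : ∀ᵐ x ∂(volume : Measure (Fin d → ℝ)),
      x ∈ Set.Icc (0 : Fin d → ℝ) 1 → ENNReal.ofReal μ ≤ g x)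
    (hsupp : P (Set.Icc (0 : Fin d → ℝ) 1)ᶜ = 0)
    (ψ : (Fin d → ℝ) → ℝ)
    (hψ : ∀ x ∈ Set.Icc (0 : Fin d → ℝ) 1, ∀ y ∈ Set.Icc (0 : Fin d → ℝ) 1,
      |ψ x - ψ y| ≤ lam * dist x y)
    (x₀ : Fin d → ℝ) (hx₀ : x₀ ∈ Set.Icc (0 : Fin d → ℝ) 1)
    (h : ℝ) (hh : h ∈ Set.Ioc (0 : ℝ) 1) (ε : ℝ)
    (hint : |∫ x, ψ x * (Metric.closedBall x₀ h).indicator (fun _ => (1 : ℝ)) x ∂P| ≤ ε) :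
    |ψ x₀| ≤ lam * h + ε / (μ * h ^ d) := by
  set S : Set (Fin d → ℝ) := Set.Icc 0 1
  set t := Metric.closedBall x₀ h ∩ S
  have ht : MeasurableSet t := measurableSet_closedBall.inter measurableSet_Icc
  have hint_t : ∫ x, ψ x * (Metric.closedBall x₀ h).indicator (fun _ => (1 : ℝ)) x ∂P =
      ∫ x in t, ψ x ∂P := by
    simp_rw [← Set.indicator_mul_right, mul_one]
    rw [integral_indicator measurableSet_closedBall, ← Measure.restrict_restrict
      measurableSet_closedBall, Measure.restrict_eq_self_of_ae_mem
      (s := S) (mem_ae_iff.2 hsupp)]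
  have hmass : μ * h ^ d ≤ P.real t := by
    have hvol := ofReal_pow_card_le_volume_closedBall_inter_Icc hx₀ hh.1.le hh.2
    rw [Fintype.card_fin] at hvol
    rw [Measure.real, ← ENNReal.ofReal_le_iff_le_toReal (measure_ne_top P t),
      ENNReal.ofReal_mul hμ.le, ENNReal.ofReal_pow hh.1.le, hP]
    exact (mul_le_mul_right hvol _).trans
      (mul_le_withDensity_apply_of_ae_le hgμ ht Set.inter_subset_right)
  have hψt : ∀ x ∈ t, |ψ x - ψ x₀| ≤ lam * h := fun x hx =>
    (hψ x hx.2 x₀ hx₀).trans (mul_le_mul_of_nonneg_left hx.1 hlam.le)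
  have hψint : IntegrableOn ψ t P := by
    have hψS : LipschitzOnWith ⟨lam, hlam.le⟩ ψ S := LipschitzOnWith.of_dist_le_mul hψ
    exact (hψS.continuousOn.mono Set.inter_subset_right).integrableOn_compact
      ((isCompact_closedBall x₀ h).inter_right isClosed_Icc)
  have hpos : 0 < μ * h ^ d := by have := hh.1; positivity
  exact abs_le_add_div_of_abs_setIntegral_le hψint hψt (hint_t ▸ hint) hpos hmass

/-- **Lipschitz conditional moments and uniform-kernel test functions.** If `P` is a
probability measure on `[0,1]^d` with Lebesgue density bounded below by `μ` there, `ψ` is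
`λ`-Lipschitz on `[0,1]^d` for the `ℓ∞` metric, and the moment against the indicator of the
`ℓ∞` ball of radius `h ∈ (0,1]` around `x₀` is at most `ε` in absolute value, then
`|ψ(x₀)| ≤ λ·h + ε/(μ·h^d)`. (On `Fin d → ℝ`, `dist` is the `ℓ∞` metric.) -/
theorem stmt4
    {d : ℕ} (hd : 1 ≤ d) (μ lam : ℝ) (hμ : 0 < μ) (hlam : 0 < lam)
    (g : (Fin d → ℝ) → ℝ≥0∞) (hg : Measurable g)
    (P : Measure (Fin d → ℝ)) [IsProbabilityMeasure P]
    (hP : P = volume.withDensity g)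
    (hgμ : ∀ᵐ x ∂(volume : Measure (Fin d → ℝ)),
      x ∈ Set.Icc (0 : Fin d → ℝ) 1 → ENNReal.ofReal μ ≤ g x)
    (hsupp : P (Set.Icc (0 : Fin d → ℝ) 1)ᶜ = 0)
    (ψ : (Fin d → ℝ) → ℝ)
    (hψ : ∀ x ∈ Set.Icc (0 : Fin d → ℝ) 1, ∀ y ∈ Set.Icc (0 : Fin d → ℝ) 1,
      |ψ x - ψ y| ≤ lam * dist x y)
    (x₀ : Fin d → ℝ) (hx₀ : x₀ ∈ Set.Icc (0 : Fin d → ℝ) 1)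
    (h : ℝ) (hh : h ∈ Set.Ioc (0 : ℝ) 1) (ε : ℝ) (hε : 0 ≤ ε)
    (hint : |∫ x, ψ x * (Metric.closedBall x₀ h).indicator (fun _ => (1 : ℝ)) x ∂P| ≤ ε) :
    |ψ x₀| ≤ lam * h + ε / (μ * h ^ d) :=
  stmt4_general μ lam hμ hlam g P hP hgμ hsupp ψ hψ x₀ hx₀ h hh ε hint
end

section
/- Let Θ be a nonempty set, F a finite nonempty set, and m, m_n : Θ × F → ℝ functions satisfying |m_n(θ, f) − m(θ, f)| ≤ Δ, |m(θ, f)| ≤ H, and |m_n(θ, f)| ≤ H for all θ ∈ Θ and f ∈ F, where Δ, H ≥ 0. Define the empirical loss L_n(θ, σ) := Σ_{f∈F} σ f · m_n(θ, f)² and the population loss L(θ, σ) := Σ_{f∈F} σ f · m(θ, f)² for probability vectors σ on F. If (θ*, σ*) is an ε-approximate equilibrium of the game on Θ × Δ(F) with loss L_n, then (θ*, σ*) is an (ε + 4HΔ)-approximate equilibrium of the game on Θ × Δ(F) with loss L. -/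
/-! Since `m_n² - m² = (m_n + m)(m_n - m)`, the two losses differ by at most `2HΔ` at every
`(θ, σ)`. An approximate optimizer of one objective remains one for any uniformly `δ`-close
objective at the price of `2δ`: one `δ` at the optimizer and one at each competitor. -/

/-- A probability vector on a finite type `F`. -/
def IsProbVec {F : Type*} [Fintype F] (σ : F → ℝ) : Prop :=
  (∀ f, 0 ≤ σ f ∧ σ f ≤ 1) ∧ ∑ f, σ f = 1

open Set

lemma abs_sq_sub_sq_le {a b Δ H : ℝ} (hab : |a - b| ≤ Δ) (ha : |a| ≤ H) (hb : |b| ≤ H) :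
    |a ^ 2 - b ^ 2| ≤ 2 * H * Δ :=
  calc |a ^ 2 - b ^ 2| = |a + b| * |a - b| := by rw [sq_sub_sq, abs_mul]
    _ ≤ (2 * H) * Δ :=
      mul_le_mul (by linarith [abs_add_le a b]) hab (abs_nonneg _)
        (by linarith [abs_nonneg a])

namespace IsProbVec

variable {F : Type*} [Fintype F] {σ : F → ℝ}

lemma abs_sum_mul_le (hσ : IsProbVec σ) {g : F → ℝ} {C : ℝ} (hg : ∀ f, |g f| ≤ C) :
    |∑ f, σ f * g f| ≤ C :=
  calc |∑ f, σ f * g f| ≤ ∑ f, |σ f * g f| := Finset.abs_sum_le_sum_abs _ _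
    _ ≤ ∑ f, σ f * C := Finset.sum_le_sum fun f _ => by
        rw [abs_mul, abs_of_nonneg (hσ.1 f).1]
        exact mul_le_mul_of_nonneg_left (hg f) (hσ.1 f).1
    _ = C := by rw [← Finset.sum_mul, hσ.2, one_mul]

lemma abs_sum_mul_sq_sub_sum_mul_sq_le (hσ : IsProbVec σ) {a b : F → ℝ} {Δ H : ℝ}
    (hab : ∀ f, |a f - b f| ≤ Δ) (ha : ∀ f, |a f| ≤ H) (hb : ∀ f, |b f| ≤ H) :
    |∑ f, σ f * a f ^ 2 - ∑ f, σ f * b f ^ 2| ≤ 2 * H * Δ := by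
  simp_rw [← Finset.sum_sub_distrib, ← mul_sub]
  exact hσ.abs_sum_mul_le fun f => abs_sq_sub_sq_le (hab f) (ha f) (hb f)

lemma sum_mul_sq_le (hσ : IsProbVec σ) {a : F → ℝ} {H : ℝ} (ha : ∀ f, |a f| ≤ H) :
    ∑ f, σ f * a f ^ 2 ≤ H ^ 2 :=
  (le_abs_self _).trans <| hσ.abs_sum_mul_le fun f => by
    rw [abs_pow]; exact pow_le_pow_left₀ (abs_nonneg _) (ha f) 2

lemma sum_mul_sq_nonneg (hσ : IsProbVec σ) (a : F → ℝ) : 0 ≤ ∑ f, σ f * a f ^ 2 :=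
  Finset.sum_nonneg fun f _ => mul_nonneg (hσ.1 f).1 (sq_nonneg _)

end IsProbVec

section ApproximateOptimizers

variable {ι : Type*} {f g : ι → ℝ} {δ ε : ℝ} {i₀ : ι}

lemma le_csInf_range_add_of_abs_sub_le (hf : BddBelow (range f)) (hfg : ∀ i, |f i - g i| ≤ δ)
    (h : f i₀ ≤ sInf (range f) + ε) : g i₀ ≤ sInf (range g) + (ε + 2 * δ) := by
  have hinf : sInf (range f) - δ ≤ sInf (range g) :=
    le_csInf ⟨g i₀, i₀, rfl⟩ <| forall_mem_range.2 fun i => by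
      linarith [csInf_le hf (mem_range_self i), (abs_le.1 (hfg i)).2]
  linarith [(abs_le.1 (hfg i₀)).1]

lemma csSup_sub_le_of_abs_sub_le {P : ι → Prop} (hi₀ : P i₀)
    (hf : BddAbove {y | ∃ i, P i ∧ y = f i}) (hfg : ∀ i, P i → |f i - g i| ≤ δ)
    (h : sSup {y | ∃ i, P i ∧ y = f i} - ε ≤ f i₀) :
    sSup {y | ∃ i, P i ∧ y = g i} - (ε + 2 * δ) ≤ g i₀ := by
  have hsup : sSup {y | ∃ i, P i ∧ y = g i} ≤ sSup {y | ∃ i, P i ∧ y = f i} + δ :=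
    csSup_le ⟨g i₀, i₀, hi₀, rfl⟩ <| by
      rintro _ ⟨i, hi, rfl⟩
      linarith [le_csSup hf ⟨i, hi, rfl⟩, (abs_le.1 (hfg i hi)).1]
  linarith [(abs_le.1 (hfg i₀ hi₀)).2]

end ApproximateOptimizers

theorem stmt12_general {Θ F : Type*} [Fintype F]
    (m mn : Θ → F → ℝ) (Δ H : ℝ)
    (hclose : ∀ θ f, |mn θ f - m θ f| ≤ Δ)
    (hm : ∀ θ f, |m θ f| ≤ H) (hmn : ∀ θ f, |mn θ f| ≤ H)
    (Ln L : Θ → (F → ℝ) → ℝ)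
    (hLn : ∀ θ σ, Ln θ σ = ∑ f, σ f * (mn θ f) ^ 2)
    (hL : ∀ θ σ, L θ σ = ∑ f, σ f * (m θ f) ^ 2)
    (θs : Θ) (σs : F → ℝ) (hσs : IsProbVec σs) (ε : ℝ)
    (h1 : Ln θs σs ≤ sInf (Set.range fun θ => Ln θ σs) + ε)
    (h2 : Ln θs σs ≥ sSup {y | ∃ σ : F → ℝ, IsProbVec σ ∧ y = Ln θs σ} - ε) :
    L θs σs ≤ sInf (Set.range fun θ => L θ σs) + (ε + 4 * H * Δ) ∧
      L θs σs ≥ sSup {y | ∃ σ : F → ℝ, IsProbVec σ ∧ y = L θs σ} - (ε + 4 * H * Δ) := by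
  have hLn_L : ∀ θ σ, IsProbVec σ → |Ln θ σ - L θ σ| ≤ 2 * H * Δ := fun θ σ hσ => by
    rw [hLn, hL]
    exact hσ.abs_sum_mul_sq_sub_sum_mul_sq_le (hclose θ) (hmn θ) (hm θ)
  rw [show 4 * H * Δ = 2 * (2 * H * Δ) by ring]
  constructor
  · refine le_csInf_range_add_of_abs_sub_le ⟨0, ?_⟩ (fun θ => hLn_L θ σs hσs) h1
    rintro _ ⟨θ, rfl⟩
    exact (hLn θ σs).ge.trans' (hσs.sum_mul_sq_nonneg _)
  · refine csSup_sub_le_of_abs_sub_le hσs ⟨H ^ 2, ?_⟩ (hLn_L θs) h2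
    rintro _ ⟨σ, hσ, rfl⟩
    exact (hLn θs σ).le.trans (hσ.sum_mul_sq_le (hmn θs))

/-- If the empirical moments `m_n` are uniformly `Δ`-close to the population moments `m`
(both bounded by `H`), then any `ε`-approximate equilibrium of the empirical game with loss
`L_n` is an `(ε + 4HΔ)`-approximate equilibrium of the population game with loss `L`. -/
theorem stmt12 {Θ F : Type*} [Nonempty Θ] [Fintype F] [Nonempty F]
    (m mn : Θ → F → ℝ) (Δ H : ℝ) (hΔ : 0 ≤ Δ) (hH : 0 ≤ H)
    (hclose : ∀ θ f, |mn θ f - m θ f| ≤ Δ)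
    (hm : ∀ θ f, |m θ f| ≤ H) (hmn : ∀ θ f, |mn θ f| ≤ H)
    (Ln L : Θ → (F → ℝ) → ℝ)
    (hLn : ∀ θ σ, Ln θ σ = ∑ f, σ f * (mn θ f) ^ 2)
    (hL : ∀ θ σ, L θ σ = ∑ f, σ f * (m θ f) ^ 2)
    (θs : Θ) (σs : F → ℝ) (hσs : IsProbVec σs) (ε : ℝ) (hε : 0 ≤ ε)
    (h1 : Ln θs σs ≤ sInf (Set.range fun θ => Ln θ σs) + ε)
    (h2 : Ln θs σs ≥ sSup {y | ∃ σ : F → ℝ, IsProbVec σ ∧ y = Ln θs σ} - ε) :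
    L θs σs ≤ sInf (Set.range fun θ => L θ σs) + (ε + 4 * H * Δ) ∧
      L θs σs ≥ sSup {y | ∃ σ : F → ℝ, IsProbVec σ ∧ y = L θs σ} - (ε + 4 * H * Δ) :=
  stmt12_general m mn Δ H hclose hm hmn Ln L hLn hL θs σs hσs ε h1 h2
end
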